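/- Let b : (0,∞) → ℝ be bounded with upper-semi-continuous envelope b*, and let t_n^i be the landmark points defined by t_n^i = inf{ t ∈ [i/2^n,(i+1)/2^n] : b*(t) ≥ sup_{[i/2^n,(i+1)/2^n]} b }. Then for every n and i, either t_n^i = t_{n+1}^{2i} or t_n^i = t_{n+1}^{2i+1}; consequently the set LM_n(b) = {t_n^i : i ∈ ℕ} satisfies LM_n(b) ⊆ LM_{n+1}(b). -/

import Mathlib

/-!
Let `S`, `S_L`, `S_R` be the suprema of `b` over a dyadic interval `[p, q]` and over its halves
`[p, m]`, `[m, q]`, so that `S = max S_L S_R`. On every compact `[p, q] ⊆ [0, ∞)` the envelope `b*`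
reaches the supremum of `b`: either `b` attains it, or a cluster point of a maximizing net is a
point where the limsup of `b` is at least `S`. If `S_R ≤ S_L`, the first point of `[p, q]` where
`b* ≥ S` therefore lies in `[p, m]` and is the landmark of the left half. If `S_L < S_R`, then
`b* ≤ S_L < S` on `(p, m)`, so that first point is either `p`, which is then also the landmark of
the left half, or it lies in `[m, q]` and is the landmark of the right half.
-/

open Filter Set Topology

/-- The upper-semi-continuous envelope of `b` on `(0,∞)`. -/
noncomputable def bstarEnv (b : ℝ → ℝ) (t : ℝ) : ℝ :=
  max (b t) (Filter.limsup b (nhdsWithin t ({t}ᶜ ∩ Set.Ioi 0)))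

/-- The landmark point `t_n^i`. -/
noncomputable def landmark (b : ℝ → ℝ) (n i : ℕ) : ℝ :=
  sInf {t ∈ Set.Icc ((i : ℝ) / 2 ^ n) (((i : ℝ) + 1) / 2 ^ n) |
    sSup (b '' Set.Icc ((i : ℝ) / 2 ^ n) (((i : ℝ) + 1) / 2 ^ n)) ≤ bstarEnv b t}

noncomputable def landmarkOn (b g : ℝ → ℝ) (p q : ℝ) : ℝ :=
  sInf {t ∈ Icc p q | sSup (b '' Icc p q) ≤ g t}

theorem landmarkOn_eq_or_eq {b g : ℝ → ℝ} {p m q : ℝ} (hb : BddAbove (b '' Icc p q))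
    (hL : ∃ t ∈ Icc p m, sSup (b '' Icc p m) ≤ g t)
    (hR : ∃ t ∈ Icc m q, sSup (b '' Icc m q) ≤ g t)
    (hg : ∀ t ∈ Ioo p m, g t ≤ sSup (b '' Icc p m)) :
    landmarkOn b g p q = landmarkOn b g p m ∨ landmarkOn b g p q = landmarkOn b g m q := by
  obtain ⟨l, hl, hSl⟩ := hL
  obtain ⟨r, hr, hSr⟩ := hR
  have hpm : p ≤ m := hl.1.trans hl.2
  have hmq : m ≤ q := hr.1.trans hr.2
  have hS : sSup (b '' Icc p q) = max (sSup (b '' Icc p m)) (sSup (b '' Icc m q)) := by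
    rw [← Icc_union_Icc_eq_Icc hpm hmq, image_union] at hb ⊢
    exact csSup_union (hb.mono subset_union_left) ((nonempty_Icc.2 hpm).image b)
      (hb.mono subset_union_right) ((nonempty_Icc.2 hmq).image b)
  unfold landmarkOn
  rcases le_or_gt (sSup (b '' Icc m q)) (sSup (b '' Icc p m)) with hRL | hLR
  · left
    rw [hS, max_eq_left hRL]
    apply csInf_eq_csInf_of_forall_exists_le
    · rintro x ⟨hx, hSx⟩
      rcases le_or_gt x m with hxm | hmx
      · exact ⟨x, ⟨⟨hx.1, hxm⟩, hSx⟩, le_rfl⟩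
      · exact ⟨l, ⟨hl, hSl⟩, hl.2.trans hmx.le⟩
    · rintro y ⟨hy, hSy⟩
      exact ⟨y, ⟨⟨hy.1, hy.2.trans hmq⟩, hSy⟩, le_rfl⟩
  rw [hS, max_eq_right hLR.le]
  by_cases hgp : sSup (b '' Icc m q) ≤ g p
  · left
    apply csInf_eq_csInf_of_forall_exists_le
    · rintro x ⟨hx, -⟩
      exact ⟨p, ⟨left_mem_Icc.2 hpm, hLR.le.trans hgp⟩, hx.1⟩
    · rintro y ⟨hy, -⟩
      exact ⟨p, ⟨left_mem_Icc.2 (hpm.trans hmq), hgp⟩, hy.1⟩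
  · right
    apply csInf_eq_csInf_of_forall_exists_le
    · rintro x ⟨hx, hSx⟩
      refine ⟨x, ⟨⟨?_, hx.2⟩, hSx⟩, le_rfl⟩
      by_contra! hxm
      rcases hx.1.eq_or_lt with rfl | hpx
      · exact hgp hSx
      · exact (hg x ⟨hpx, hxm⟩).not_gt (hLR.trans_le hSx)
    · rintro y ⟨hy, hSy⟩
      exact ⟨y, ⟨⟨hpm.trans hy.1, hy.2⟩, hSy⟩, le_rfl⟩

section Envelope

variable {b : ℝ → ℝ} {M : ℝ}

theorem bddAbove_image_of_abs_le (hb : ∀ t, |b t| ≤ M) (s : Set ℝ) : BddAbove (b '' s) :=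
  ⟨M, by rintro _ ⟨x, -, rfl⟩; exact (abs_le.1 (hb x)).2⟩

theorem isBoundedUnder_le_of_abs_le (hb : ∀ t, |b t| ≤ M) (F : Filter ℝ) :
    F.IsBoundedUnder (· ≤ ·) b :=
  isBoundedUnder_of ⟨M, fun t => (abs_le.1 (hb t)).2⟩

theorem isCoboundedUnder_le_of_abs_le (hb : ∀ t, |b t| ≤ M) (F : Filter ℝ) [F.NeBot] :
    F.IsCoboundedUnder (· ≤ ·) b :=
  (isBoundedUnder_of ⟨-M, fun t => (abs_le.1 (hb t)).1⟩).isCoboundedUnder_le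

theorem neBot_nhdsWithin_compl_singleton_inter_Ioi_zero {t : ℝ} (ht : 0 ≤ t) :
    (𝓝[{t}ᶜ ∩ Ioi 0] t).NeBot :=
  (nhdsGT_neBot t).mono (nhdsWithin_mono t fun _ hx => ⟨ne_of_gt hx, ht.trans_lt hx⟩)

theorem bstarEnv_le_of_eventually_le (hb : ∀ t, |b t| ≤ M) {t C : ℝ} (ht : 0 ≤ t)
    (hC : ∀ᶠ s in 𝓝 t, b s ≤ C) : bstarEnv b t ≤ C :=
  have := neBot_nhdsWithin_compl_singleton_inter_Ioi_zero ht
  max_le hC.self_of_nhds <|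
    limsup_le_of_le (isCoboundedUnder_le_of_abs_le hb _) (hC.filter_mono nhdsWithin_le_nhds)

theorem le_bstarEnv_of_tendsto (hb : ∀ t, |b t| ≤ M) {t S : ℝ} {H : Filter ℝ} [H.NeBot]
    (hH : H ≤ 𝓝[{t}ᶜ ∩ Ioi 0] t) (hS : Tendsto b H (𝓝 S)) : S ≤ bstarEnv b t :=
  calc S = limsup b H := hS.limsup_eq.symm
    _ ≤ limsup b (𝓝[{t}ᶜ ∩ Ioi 0] t) :=
      limsup_le_limsup_of_le hH (isCoboundedUnder_le_of_abs_le hb H)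
        (isBoundedUnder_le_of_abs_le hb _)
    _ ≤ bstarEnv b t := le_max_right _ _

theorem exists_sSup_image_Icc_le_bstarEnv (hb : ∀ t, |b t| ≤ M) {p q : ℝ} (hp : 0 ≤ p)
    (hpq : p ≤ q) : ∃ t ∈ Icc p q, sSup (b '' Icc p q) ≤ bstarEnv b t := by
  set S := sSup (b '' Icc p q)
  by_cases hattained : ∃ t ∈ Icc p q, S ≤ b t
  · obtain ⟨t, ht, hSt⟩ := hattained
    exact ⟨t, ht, hSt.trans (le_max_left _ _)⟩
  push Not at hattained
  set G := comap b (𝓝 S) ⊓ 𝓟 (Icc p q)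
  have hG : G.NeBot := by
    have hS : S ∈ closure (b '' Icc p q) :=
      csSup_mem_closure ((nonempty_Icc.2 hpq).image b) (bddAbove_image_of_abs_le hb _)
    rw [mem_closure_iff_clusterPt, ClusterPt, ← map_principal, ← Filter.push_pull'] at hS
    exact hS.of_map
  obtain ⟨t, ht, htG⟩ := isCompact_Icc (f := G) inf_le_right
  -- `S` is not attained on `Icc p q`, so `G` eventually avoids each of its points
  have hG_avoid : ∀ x ∈ Icc p q, {x}ᶜ ∈ G := fun x hx =>
    mem_inf_of_left <| mem_comap.2 ⟨Ioi (b x), Ioi_mem_nhds (hattained x hx), by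
      rintro y hy rfl
      exact lt_irrefl (b y) hy⟩
  have hGt : G ≤ 𝓟 ({t}ᶜ ∩ Ioi 0) := by
    refine le_principal_iff.2 <| mem_of_superset (inter_mem (inter_mem (hG_avoid t ht)
      (hG_avoid p (left_mem_Icc.2 hpq))) (mem_inf_of_right (mem_principal_self _))) ?_
    rintro x ⟨⟨hxt, hxp⟩, hx⟩
    exact ⟨hxt, hp.trans_lt (hx.1.lt_of_ne (Ne.symm hxp))⟩
  have : (𝓝 t ⊓ G).NeBot := htG
  exact ⟨t, ht, le_bstarEnv_of_tendsto hb (H := 𝓝 t ⊓ G) (inf_le_inf_left _ hGt)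
    (tendsto_comap.mono_left (inf_le_right.trans inf_le_left))⟩

theorem landmarkOn_bstarEnv_eq_or_eq (hb : ∀ t, |b t| ≤ M) {p m q : ℝ} (hp : 0 ≤ p)
    (hpm : p ≤ m) (hmq : m ≤ q) :
    landmarkOn b (bstarEnv b) p q = landmarkOn b (bstarEnv b) p m ∨
      landmarkOn b (bstarEnv b) p q = landmarkOn b (bstarEnv b) m q :=
  landmarkOn_eq_or_eq (bddAbove_image_of_abs_le hb _)
    (exists_sSup_image_Icc_le_bstarEnv hb hp hpm)
    (exists_sSup_image_Icc_le_bstarEnv hb (hp.trans hpm) hmq) fun _ ht =>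
      bstarEnv_le_of_eventually_le hb (hp.trans ht.1.le) <|
        eventually_of_mem (isOpen_Ioo.mem_nhds ht) fun s hs =>
          le_csSup (bddAbove_image_of_abs_le hb _) ⟨s, Ioo_subset_Icc_self hs, rfl⟩

end Envelope

section Dyadic

variable (b : ℝ → ℝ) (n i : ℕ)

theorem landmark_eq_landmarkOn :
    landmark b n i = landmarkOn b (bstarEnv b) (i / 2 ^ n) ((i + 1) / 2 ^ n) :=
  rfl

theorem landmark_succ_two_mul : landmark b (n + 1) (2 * i) =
    landmarkOn b (bstarEnv b) (i / 2 ^ n) ((2 * i + 1) / 2 ^ (n + 1)) := by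
  rw [landmark_eq_landmarkOn]
  congr 1 <;> push_cast <;> ring

theorem landmark_succ_two_mul_add_one : landmark b (n + 1) (2 * i + 1) =
    landmarkOn b (bstarEnv b) ((2 * i + 1) / 2 ^ (n + 1)) ((i + 1) / 2 ^ n) := by
  rw [landmark_eq_landmarkOn]
  congr 1 <;> push_cast <;> ring

theorem dyadic_midpoint_mem_Icc :
    (2 * i + 1 : ℝ) / 2 ^ (n + 1) ∈ Icc ((i : ℝ) / 2 ^ n) ((i + 1) / 2 ^ n) := by
  rw [pow_succ]
  constructor <;> rw [div_le_div_iff₀ (by positivity) (by positivity)] <;>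
    nlinarith [pow_pos (two_pos : (0 : ℝ) < 2) n]

end Dyadic

/-- either `t_n^i = t_{n+1}^{2i}` or `t_n^i = t_{n+1}^{2i+1}`;
consequently `LM_n(b) ⊆ LM_{n+1}(b)`. -/
theorem stmt3 (b : ℝ → ℝ) (M : ℝ) (hb : ∀ t : ℝ, |b t| ≤ M) (n : ℕ) :
    (∀ i : ℕ, landmark b n i = landmark b (n + 1) (2 * i)
        ∨ landmark b n i = landmark b (n + 1) (2 * i + 1))
    ∧ {t : ℝ | ∃ i : ℕ, t = landmark b n i}
        ⊆ {t : ℝ | ∃ j : ℕ, t = landmark b (n + 1) j} := by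
  have hsplit : ∀ i : ℕ, landmark b n i = landmark b (n + 1) (2 * i)
      ∨ landmark b n i = landmark b (n + 1) (2 * i + 1) := fun i => by
    rw [landmark_eq_landmarkOn, landmark_succ_two_mul, landmark_succ_two_mul_add_one]
    exact landmarkOn_bstarEnv_eq_or_eq hb (by positivity) (dyadic_midpoint_mem_Icc n i).1
      (dyadic_midpoint_mem_Icc n i).2
  refine ⟨hsplit, ?_⟩
  rintro t ⟨i, rfl⟩
  exact (hsplit i).elim (fun h => ⟨2 * i, h⟩) fun h => ⟨2 * i + 1, h⟩
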